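/- arXiv:2402.06129 — 2 statements merged into one kernel-verified Lean document; each statement's English description precedes it below -/
import Mathlib

section
/- The DOC kernels θ satisfy the discrete orthogonality identity Σ_{i=j}^{n} θ_{n-i}^{(n)} d_{i-j}^{(i)} = δ_{nj} for all 2 ≤ j ≤ n, where δ_{nj} is the Kronecker delta. -/
open Finset

/-- Leading BDF2 kernel coefficient d_0^{(n)} = (1+2 r_n)/(1+r_n). -/
noncomputable def d0 (r : ℕ → ℝ) (n : ℕ) : ℝ := (1 + 2 * r n) / (1 + r n)

/-- The variable-step BDF2 kernels d_j^{(n)}. -/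
noncomputable def dker (r : ℕ → ℝ) (n j : ℕ) : ℝ :=
  if j = 0 then (1 + 2 * r n) / (1 + r n)
  else if j = 1 then -(r n) / (1 + r n)
  else 0

/-- The DOC kernels (explicit formula): θ_{n-j}^{(n)} is written theta r n j. -/
noncomputable def theta (r : ℕ → ℝ) (n j : ℕ) : ℝ :=
  (1 / d0 r j) * ∏ i ∈ Finset.Icc (j + 1) n, r i / (1 + 2 * r i)

/-- Discrete time-difference quotient ∂_τ v^j = (v^j - v^{j-1})/τ_j. -/
noncomputable def dtau (τ : ℕ → ℝ) (v : ℕ → ℝ) (j : ℕ) : ℝ := (v j - v (j - 1)) / τ j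

/-- The variable-step BDF2 operator D_2 v^n = ∑_{j=1}^n d_{n-j}^{(n)} ∂_τ v^j. -/
noncomputable def D2 (r τ : ℕ → ℝ) (v : ℕ → ℝ) (n : ℕ) : ℝ :=
  ∑ j ∈ Finset.Icc 1 n, dker r n (n - j) * dtau τ v j

/-!
Since `d_k^{(i)} = 0` for `k ≥ 2`, only the terms `i = j` and `i = j + 1` survive. Multiplying
by `d_0^{(j)}` cancels the prefactor of `θ_{n-j}^{(n)}`, leaving `P = ∏_{i=j+1}^n r_i/(1+2r_i)`;
the `i = j + 1` term is `-P`, because `d_1^{(j+1)} / d_0^{(j+1)} = -r_{j+1}/(1+2r_{j+1})` is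
exactly the first factor of `P`, with opposite sign.
-/

lemma dker_eq_zero_of_two_le (r : ℕ → ℝ) (n : ℕ) {k : ℕ} (hk : 2 ≤ k) : dker r n k = 0 := by
  rw [dker, if_neg (by omega), if_neg (by omega)]

lemma d0_pos {r : ℕ → ℝ} {n : ℕ} (h : 0 < r n) : 0 < d0 r n := by
  unfold d0; positivity

lemma sum_Icc_mul_dker_sub (r f : ℕ → ℝ) {j n : ℕ} (hjn : j < n) :
    ∑ i ∈ Icc j n, f i * dker r i (i - j) = f j * d0 r j + f (j + 1) * dker r (j + 1) 1 := by
  rw [sum_eq_add j (j + 1) (by omega) ?_ (by simp; omega) (by simp; omega), Nat.sub_self,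
    Nat.add_sub_cancel_left]
  · rfl
  intro i hi hij
  rw [mem_Icc] at hi
  rw [dker_eq_zero_of_two_le r i (by omega), mul_zero]

lemma theta_mul_d0 {r : ℕ → ℝ} (n : ℕ) {j : ℕ} (hj : d0 r j ≠ 0) :
    theta r n j * d0 r j = ∏ i ∈ Icc (j + 1) n, r i / (1 + 2 * r i) := by
  rw [theta, mul_comm, ← mul_assoc, mul_one_div_cancel hj, one_mul]

lemma theta_succ_mul_dker_one {r : ℕ → ℝ} {n j : ℕ} (hjn : j < n) (hj : d0 r j ≠ 0)
    (hj₁ : 1 + r (j + 1) ≠ 0) :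
    theta r n (j + 1) * dker r (j + 1) 1 = -(theta r n j * d0 r j) := by
  rw [theta_mul_d0 n hj, ← mul_prod_Ioc_eq_prod_Icc (by omega), ← Icc_add_one_left_eq_Ioc,
    theta, dker, d0, if_neg one_ne_zero, if_pos rfl]
  field_simp

/-- the discrete orthogonality identity of the DOC kernels. -/
theorem stmt_2 (r : ℕ → ℝ) (hr : ∀ k, 2 ≤ k → 0 < r k) :
    ∀ n j, 2 ≤ j → j ≤ n →
      ∑ i ∈ Finset.Icc j n, theta r n i * dker r i (i - j)
        = if n = j then (1 : ℝ) else 0 := by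
  intro n j hj hjn
  have hd0 : d0 r j ≠ 0 := (d0_pos (hr j hj)).ne'
  rcases hjn.eq_or_lt with rfl | hjn
  · rw [if_pos rfl, Icc_self, sum_singleton, Nat.sub_self]
    exact (theta_mul_d0 j hd0).trans (by simp)
  · have hj₁ : 1 + r (j + 1) ≠ 0 := by linarith [hr (j + 1) (by omega)]
    rw [if_neg hjn.ne', sum_Icc_mul_dker_sub r _ hjn, theta_succ_mul_dker_one hjn hd0 hj₁,
      add_neg_cancel]
end

section
/- Convolution transformation identity: for any sequence (v^j), multiplying the BDF2 operator by DOC kernels and summing yields Σ_{i=2}^{n} θ_{n-i}^{(n)} D_2 v^i = ∂_τ v^n + ∂_τ v^1 · Σ_{i=2}^{n} θ_{n-i}^{(n)} d_{i-1}^{(i)} for every 2 ≤ n ≤ N, where ∂_τ v^j = (v^j − v^{j-1})/τ_j. -/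
open Finset

/-
The DOC kernels satisfy θ^{(n+1)}_{n+1-i} = θ^{(n)}_{n-i} · r_{n+1}/(1+2r_{n+1}) for i ≤ n, and
θ^{(m)}_0 · D_2 v^m = ∂_τ v^m − r_m/(1+2r_m) · ∂_τ v^{m-1}, because D_2 has only the two kernels
d_0, d_1 and d_1/d_0 = −r/(1+2r). Hence passing from n to n+1 multiplies the left-hand side by
r_{n+1}/(1+2r_{n+1}) and adds θ^{(n+1)}_0 D_2 v^{n+1}, which replaces the leading term ∂_τ v^n by
∂_τ v^{n+1}; the identity follows by induction on n from the case n = 2.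
-/

lemma dker_zero (r : ℕ → ℝ) (m : ℕ) : dker r m 0 = d0 r m := rfl

lemma dker_one (r : ℕ → ℝ) (m : ℕ) : dker r m 1 = -r m / (1 + r m) := rfl

lemma dker_of_two_le (r : ℕ → ℝ) (m : ℕ) {j : ℕ} (hj : 2 ≤ j) : dker r m j = 0 := by
  simp only [dker, if_neg (by omega : j ≠ 0), if_neg (by omega : j ≠ 1)]

lemma D2_eq (r τ v : ℕ → ℝ) {m : ℕ} (hm : 2 ≤ m) :
    D2 r τ v m = dker r m 1 * dtau τ v (m - 1) + dker r m 0 * dtau τ v m := by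
  have hsupp : ∀ j ∈ Icc 1 m, j ∉ ({m - 1, m} : Finset ℕ) →
      dker r m (m - j) * dtau τ v j = 0 := by
    intro j hj hj'
    simp only [mem_Icc] at hj
    simp only [mem_insert, mem_singleton, not_or] at hj'
    rw [dker_of_two_le r m (by omega), zero_mul]
  rw [D2, ← sum_subset (by intro j; simp only [mem_insert, mem_singleton, mem_Icc]; omega) hsupp,
    sum_pair (by omega), Nat.sub_sub_self (by omega), Nat.sub_self]

lemma theta_self (r : ℕ → ℝ) (m : ℕ) : theta r m m = 1 / d0 r m := by
  rw [theta, Icc_eq_empty (by omega), prod_empty, mul_one]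

lemma theta_succ (r : ℕ → ℝ) {n i : ℕ} (hi : i ≤ n) :
    theta r (n + 1) i = theta r n i * (r (n + 1) / (1 + 2 * r (n + 1))) := by
  rw [theta, theta, prod_Icc_succ_top (by omega), mul_assoc]

lemma sum_theta_succ (r f : ℕ → ℝ) {a n : ℕ} (ha : a ≤ n + 1) :
    ∑ i ∈ Icc a (n + 1), theta r (n + 1) i * f i
      = r (n + 1) / (1 + 2 * r (n + 1)) * ∑ i ∈ Icc a n, theta r n i * f i
        + theta r (n + 1) (n + 1) * f (n + 1) := by
  rw [sum_Icc_succ_top ha, mul_sum]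
  congr 1
  refine sum_congr rfl fun i hi => ?_
  rw [theta_succ r (mem_Icc.1 hi).2]
  ring

lemma theta_self_mul_dker_zero (r : ℕ → ℝ) {m : ℕ} (hr : 0 ≤ r m) :
    theta r m m * dker r m 0 = 1 := by
  rw [theta_self, dker_zero, d0]
  field_simp

lemma theta_self_mul_dker_one (r : ℕ → ℝ) {m : ℕ} (hr : 0 ≤ r m) :
    theta r m m * dker r m 1 = -(r m / (1 + 2 * r m)) := by
  rw [theta_self, dker_one, d0]
  field_simp

lemma theta_self_mul_D2 (r τ v : ℕ → ℝ) {m : ℕ} (hr : 0 ≤ r m) (hm : 2 ≤ m) :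
    theta r m m * D2 r τ v m = dtau τ v m - r m / (1 + 2 * r m) * dtau τ v (m - 1) := by
  rw [D2_eq r τ v hm, mul_add, ← mul_assoc, ← mul_assoc, theta_self_mul_dker_zero r hr,
    theta_self_mul_dker_one r hr]
  ring

theorem sum_theta_mul_D2 (r τ v : ℕ → ℝ) (hr : ∀ k, 2 ≤ k → 0 ≤ r k) {n : ℕ} (hn : 2 ≤ n) :
    ∑ i ∈ Icc 2 n, theta r n i * D2 r τ v i
      = dtau τ v n + dtau τ v 1 * ∑ i ∈ Icc 2 n, theta r n i * dker r i (i - 1) := by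
  induction n, hn using Nat.le_induction with
  | base =>
    rw [Icc_self, sum_singleton, sum_singleton, theta_self_mul_D2 r τ v (hr 2 le_rfl) le_rfl,
      theta_self_mul_dker_one r (hr 2 le_rfl)]
    ring
  | succ n hn ih =>
    rw [sum_theta_succ r _ (by omega), sum_theta_succ r _ (by omega), ih,
      theta_self_mul_D2 r τ v (hr (n + 1) (by omega)) (by omega), Nat.add_sub_cancel,
      dker_of_two_le r _ hn]
    ring

/-- the convolution transformation identity. -/
theorem stmt_16 (N : ℕ) (r τ : ℕ → ℝ) (hr : ∀ k, 2 ≤ k → 0 < r k) :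
    ∀ v : ℕ → ℝ, ∀ n, 2 ≤ n → n ≤ N →
      ∑ i ∈ Finset.Icc 2 n, theta r n i * D2 r τ v i
        = dtau τ v n + dtau τ v 1 * ∑ i ∈ Finset.Icc 2 n, theta r n i * dker r i (i - 1) :=
  fun v _ hn _ => sum_theta_mul_D2 r τ v (fun k hk => (hr k hk).le) hn
end
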